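/- Let f be an expansive homeomorphism of a compact metric space M with expansivity constant r₀, and let P be a finite collection of pairwise disjoint open sets of diameter < r₀ with dense union. Define p : Σ(f,P) → M by {p(A)} = ⋂_{n∈ℤ} f⁻ⁿ(closure A_n). Then p is continuous and satisfies p ∘ σ = f ∘ p, where σ is the left shift on Σ(f,P). -/

import Mathlib

/-!
The graph of `p` is `{(A, x) | ∀ n, fⁿ x ∈ closure A_n}`. Each of these conditions involves a
single coordinate of `A`, which ranges over a discrete space, so the graph is closed; a map into
a compact space with closed graph is continuous. For the shift, `f (p A)` satisfies the
conditions characterising `p (σ A)`.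
-/

open Set Topology

theorem continuous_of_isClosed_graph {X Y : Type*} [TopologicalSpace X] [TopologicalSpace Y]
    [CompactSpace Y] {g : X → Y} (hg : IsClosed {q : X × Y | q.2 = g q.1}) : Continuous g := by
  refine continuous_iff_isClosed.mpr fun C hC => ?_
  convert isClosedMap_fst_of_compactSpace _ (hg.inter (isClosed_univ.prod hC)) using 1
  ext x
  simp

theorem isClosed_setOf_mem_of_continuous_discrete {X ι Y : Type*} [TopologicalSpace X]
    [TopologicalSpace ι] [DiscreteTopology ι] [TopologicalSpace Y] {a : X → ι} {g : X → Y}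
    {F : ι → Set Y} (ha : Continuous a) (hg : Continuous g) (hF : ∀ i, IsClosed (F i)) :
    IsClosed {x | g x ∈ F (a x)} := by
  refine isOpen_compl_iff.mp (isOpen_iff_mem_nhds.mpr fun x hx => ?_)
  have hloc : ∀ᶠ y in 𝓝 x, a y = a x := ha.continuousAt (isOpen_discrete {a x} |>.mem_nhds rfl)
  filter_upwards [hloc, hg.continuousAt ((hF (a x)).isOpen_compl.mem_nhds hx)] with y hy hgy
  simpa [hy] using hgy

theorem Equiv.Perm.continuous_zpow {M : Type*} [TopologicalSpace M] {f : Equiv.Perm M}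
    (hf : Continuous f) (hf' : Continuous f.symm) (n : ℤ) : Continuous ⇑(f ^ n) :=
  let toPerm : (M ≃ₜ M) →* Equiv.Perm M :=
    { toFun := Homeomorph.toEquiv, map_one' := rfl, map_mul' := fun _ _ => rfl }
  have h : f ^ n = toPerm (Homeomorph.mk f hf hf' ^ n) := by rw [map_zpow]; rfl
  h ▸ (Homeomorph.mk f hf hf' ^ n).continuous

def cylinder {M ι : Type*} (f : Equiv.Perm M) (P : ι → Set M) (A : ℤ → ι) (n m : ℤ) : Set M :=
  ⋂ k ∈ Icc n m, ⇑(f ^ (k - n)) ⁻¹' P (A k)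

theorem cylinder_shift {M ι : Type*} (f : Equiv.Perm M) (P : ι → Set M) (A : ℤ → ι) (n m : ℤ) :
    cylinder f P (fun k => A (k + 1)) n m = cylinder f P A (n + 1) (m + 1) := by
  ext x
  simp only [cylinder, mem_iInter, mem_preimage, mem_Icc]
  constructor
  · intro h k hk
    have hk' := h (k - 1) (by omega)
    rwa [sub_add_cancel, sub_sub, add_comm 1 n] at hk'
  · intro h k hk
    have hk' := h (k + 1) (by omega)
    rwa [add_sub_add_right_eq_sub] at hk'

theorem stmt_1_general {M : Type*} [MetricSpace M] [CompactSpace M]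
    (f : Equiv.Perm M) (hf : Continuous f) (hf' : Continuous f.symm)
    (ι : Type*) [TopologicalSpace ι] [DiscreteTopology ι]
    (P : ι → Set M)
    -- the symbolic space Σ(f,P), as a subtype of the full shift with product topology
    (Sig : Set (ℤ → ι))
    (hSig : Sig = {A : ℤ → ι | ∀ n m : ℤ, n ≤ m →
      (⋂ k ∈ Set.Icc n m, (⇑(f ^ (k - n)) ⁻¹' P (A k))).Nonempty})
    (p : Sig → M)
    (hp : ∀ A : Sig, (⋂ n : ℤ, ⇑(f ^ n) ⁻¹' closure (P (A.1 n))) = {p A}) :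
    Continuous p ∧
      ∀ A : Sig, ∃ hσA : (fun n => A.1 (n + 1)) ∈ Sig,
        p ⟨fun n => A.1 (n + 1), hσA⟩ = f (p A) := by
  have hcode : ∀ (A : Sig) (x : M), x = p A ↔ ∀ n : ℤ, (f ^ n) x ∈ closure (P (A.1 n)) := by
    intro A x
    rw [← mem_singleton_iff, ← hp A, mem_iInter]
    rfl
  constructor
  · apply continuous_of_isClosed_graph
    have hgraph : {q : Sig × M | q.2 = p q.1} =
        ⋂ n : ℤ, {q : Sig × M | (f ^ n) q.2 ∈ closure (P (q.1.1 n))} := by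
      ext q
      simp only [mem_ofPred_eq, hcode, mem_iInter]
    rw [hgraph]
    exact isClosed_iInter fun n => isClosed_setOf_mem_of_continuous_discrete
      (F := fun i => closure (P i))
      ((continuous_apply n).comp (continuous_subtype_val.comp continuous_fst))
      ((Equiv.Perm.continuous_zpow hf hf' n).comp continuous_snd) fun _ => isClosed_closure
  · rintro ⟨A, hA⟩
    have hσA : (fun n => A (n + 1)) ∈ Sig := by
      rw [hSig] at hA ⊢
      intro n m hnm
      change (cylinder f P _ n m).Nonempty
      rw [cylinder_shift]
      exact hA (n + 1) (m + 1) (by omega)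
    refine ⟨hσA, ((hcode _ _).mpr fun n => ?_).symm⟩
    simpa only [zpow_add_one, Equiv.Perm.mul_apply] using (hcode ⟨A, hA⟩ _).mp rfl (n + 1)

/-- the coding map `p : Σ(f,P) → M`, defined by
`{p A} = ⋂ₙ f⁻ⁿ(closure A_n)`, is continuous and satisfies `p ∘ σ = f ∘ p`. -/
theorem stmt_1 {M : Type*} [MetricSpace M] [CompactSpace M]
    (f : Equiv.Perm M) (hf : Continuous f) (hf' : Continuous f.symm)
    (r₀ : ℝ) (hr₀ : 0 < r₀)
    (hexp : ∀ x y : M, (∀ n : ℤ, dist ((f ^ n) x) ((f ^ n) y) < r₀) → x = y)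
    (ι : Type*) [Fintype ι] [TopologicalSpace ι] [DiscreteTopology ι]
    (P : ι → Set M)
    (hopen : ∀ i, IsOpen (P i))
    (hdisj : ∀ i j, i ≠ j → Disjoint (P i) (P j))
    (hdense : Dense (⋃ i, P i))
    (hdiam : ∀ i, Metric.diam (P i) < r₀)
    -- the symbolic space Σ(f,P), as a subtype of the full shift with product topology
    (Sig : Set (ℤ → ι))
    (hSig : Sig = {A : ℤ → ι | ∀ n m : ℤ, n ≤ m →
      (⋂ k ∈ Set.Icc n m, (⇑(f ^ (k - n)) ⁻¹' P (A k))).Nonempty})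
    (p : Sig → M)
    (hp : ∀ A : Sig, (⋂ n : ℤ, ⇑(f ^ n) ⁻¹' closure (P (A.1 n))) = {p A}) :
    Continuous p ∧
      ∀ A : Sig, ∃ hσA : (fun n => A.1 (n + 1)) ∈ Sig,
        p ⟨fun n => A.1 (n + 1), hσA⟩ = f (p A) :=
  stmt_1_general f hf hf' ι P Sig hSig p hp
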